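/- Let D₊ → E →(q) C be a linear extension with (C,S) a quasi-schemoid, where for every morphism f of C the maps f_* and f^* are invertible and D_{1_{s(f)}} ≅ D_{1_{s(g)}} for all σ ∈ S and f, g ∈ σ, and give E the quasi-schemoid structure S̃ = {q⁻¹(σ)}_{σ∈S}. Then the proper morphism q : (E,S̃) → (C,S) is admissible. Moreover, if (C,S) is basic, then for each σ̃ = q⁻¹(σ) ∈ S̃ the constant n_{σ̃}^q satisfies n_{σ̃}^q = ♯D_g for any g ∈ σ. -/

import Mathlib

open CategoryTheory

universe v u

/-- The set of all morphisms of a category, bundled with their endpoints. -/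
def Mor (C : Type u) [Category.{v} C] : Type max u v := Σ (x y : C), x ⟶ y

namespace Mor
variable {C : Type u} [Category.{v} C]
/-- The source of a morphism. -/
def src (m : Mor C) : C := m.1
/-- The target of a morphism. -/
def tgt (m : Mor C) : C := m.2.1
end Mor

/-- The identity of `x` as an element of `Mor C`. -/
def idMor {C : Type u} [Category.{v} C] (x : C) : Mor C := ⟨x, x, 𝟙 x⟩

/-- Bundle a morphism into `Mor C`. -/
def mk3 {C : Type u} [Category.{v} C] {x y : C} (f : x ⟶ y) : Mor C := ⟨x, y, f⟩

/-- `IsComp a b m` holds iff `a` and `b` are composable (the target of `b` is the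
source of `a`) and the composite `a ∘ b` equals `m`. -/
def IsComp {C : Type u} [Category.{v} C] (a b m : Mor C) : Prop :=
  ∃ (x y z : C) (f : x ⟶ y) (g : y ⟶ z), b = mk3 f ∧ a = mk3 g ∧ m = mk3 (f ≫ g)

/-- The fiber over `m` of the concatenation map `π_{στ} : σ ×_{ob C} τ → mor C`,
where `σ` is the class of the second (outer) factor and `τ` that of the first
(inner) factor. -/
def compFiber {C : Type u} [Category.{v} C] (σ τ : Set (Mor C)) (m : Mor C) :
    Set (Mor C × Mor C) :=
  {p | p.1 ∈ σ ∧ p.2 ∈ τ ∧ IsComp p.1 p.2 m}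

/-- A quasi-schemoid: a small category together with a partition of its set of
morphisms satisfying the concatenation axiom. -/
structure QuasiSchemoid (C : Type u) [Category.{v} C] where
  part : Set (Set (Mor C))
  isPartition : Setoid.IsPartition part
  concat : ∀ σ ∈ part, ∀ τ ∈ part, ∀ μ ∈ part, ∀ f ∈ μ, ∀ g ∈ μ,
    Nonempty ((compFiber σ τ f : Set (Mor C × Mor C)) ≃ (compFiber σ τ g : Set (Mor C × Mor C)))

/-- `p^μ_{τσ} = n` : every `m ∈ μ` has exactly `n` factorizations with outer factor
in `τ` and inner factor in `σ`. -/
def structEq {C : Type u} [Category.{v} C] (τ σ μ : Set (Mor C)) (n : ℕ) : Prop :=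
  ∀ m ∈ μ, Nat.card (compFiber τ σ m) = n

/-- The set `J₀` of identities. -/
def J0 (C : Type u) [Category.{v} C] : Set (Mor C) := {m | ∃ x : C, m = idMor x}

/-- A quasi-schemoid is unital if every class meeting `J₀` is contained in `J₀`. -/
def QuasiSchemoid.IsUnital {C : Type u} [Category.{v} C] (Q : QuasiSchemoid C) : Prop :=
  ∀ σ ∈ Q.part, (σ ∩ J0 C).Nonempty → σ ⊆ J0 C

/-- A contravariant endofunctor. -/
structure ContraFunctor (C : Type u) [Category.{v} C] where
  obj : C → C
  map : ∀ {x y : C}, (x ⟶ y) → (obj y ⟶ obj x)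
  map_id : ∀ x : C, map (𝟙 x) = 𝟙 (obj x)
  map_comp : ∀ {x y z : C} (f : x ⟶ y) (g : y ⟶ z), map (f ≫ g) = map g ≫ map f

/-- The action of a contravariant functor on bundled morphisms. -/
def ContraFunctor.onMor {C : Type u} [Category.{v} C] (T : ContraFunctor C) (m : Mor C) :
    Mor C :=
  ⟨T.obj m.2.1, T.obj m.1, T.map m.2.2⟩

/-- The set `J` of endomorphisms. -/
def JEndo (C : Type u) [Category.{v} C] : Set (Mor C) := {m | m.src = m.tgt}

/-- An association schemoid. -/
structure AssnSchemoid (C : Type u) [Category.{v} C] extends QuasiSchemoid C where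
  T : ContraFunctor C
  T_invol : ∀ m : Mor C, T.onMor (T.onMor m) = m
  T_part : ∀ σ ∈ part, T.onMor '' σ ∈ part
  endo : ∀ σ ∈ part, (σ ∩ JEndo C).Nonempty → σ ⊆ JEndo C

universe v₂ u₂

/-- The action of a functor on bundled morphisms. -/
def morMap {C : Type u} {D : Type u₂} [Category.{v} C] [Category.{v₂} D] (F : C ⥤ D)
    (m : Mor C) : Mor D :=
  ⟨F.obj m.1, F.obj m.2.1, F.map m.2.2⟩

/-- A functor is a morphism of quasi-schemoids if each class of the source partition is
mapped into some class of the target partition. -/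
def IsQSMor {C : Type u} {D : Type u₂} [Category.{v} C] [Category.{v₂} D]
    (SC : Set (Set (Mor C))) (SD : Set (Set (Mor D))) (F : C ⥤ D) : Prop :=
  ∀ σ ∈ SC, ∃ τ ∈ SD, morMap F '' σ ⊆ τ

/-- A morphism of association schemoids: a morphism of quasi-schemoids commuting with the
contravariant involutions. -/
def IsASMor {C : Type u} {D : Type u₂} [Category.{v} C] [Category.{v₂} D]
    (SC : Set (Set (Mor C))) (SD : Set (Set (Mor D)))
    (TC : ContraFunctor C) (TD : ContraFunctor D) (F : C ⥤ D) : Prop :=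
  IsQSMor SC SD F ∧ ∀ m : Mor C, morMap F (TC.onMor m) = TD.onMor (morMap F m)

/-- `S₀` : the classes containing some identity. -/
def S0 {C : Type u} [Category.{v} C] (S : Set (Set (Mor C))) : Set (Set (Mor C)) :=
  {α | α ∈ S ∧ ∃ x : C, idMor x ∈ α}

/-- `_αS_β = {σ ∈ S | p^σ_{σα} = p^σ_{βσ} = 1}`. -/
def hom2 {C : Type u} [Category.{v} C] (S : Set (Set (Mor C))) (α β : Set (Mor C)) :
    Set (Set (Mor C)) :=
  {σ | σ ∈ S ∧ structEq σ α σ 1 ∧ structEq β σ σ 1}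

/-- The partition class containing a given morphism. -/
def classOf {C : Type u} [Category.{v} C] (S : Set (Set (Mor C))) (m : Mor C) :
    Set (Mor C) :=
  {m' | ∃ σ ∈ S, m ∈ σ ∧ m' ∈ σ}

/-- An admissible morphism of quasi-schemoids (Definition 6.2 of Kuribayashi–Matsuo):
a morphism of quasi-schemoids `φ` such that for every object `x`, every class `σ` and
every `g ∈ φ(σ)` with `t(g) = φ(x)`, there is `f ∈ σ` with `t(f) = x` and `φ(f) = g`. -/
def IsAdmissible {C : Type u} {D : Type u₂} [Category.{v} C] [Category.{v₂} D]
    (SC : Set (Set (Mor C))) (SD : Set (Set (Mor D))) (F : C ⥤ D) : Prop :=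
  IsQSMor SC SD F ∧
    ∀ (x : C), ∀ σ ∈ SC, ∀ g ∈ morMap F '' σ, Mor.tgt g = F.obj x →
      ∃ f ∈ σ, Mor.tgt f = x ∧ morMap F f = g

/-- The category of factorizations `F(C)` : objects are the morphisms of `C`, and a
morphism `f → g` is a pair `(α,β)` with `α ∘ f ∘ β = g`. -/
def FactCat (C : Type u) [Category.{v} C] : Type max u v := Mor C

/-- Reinterpret an element of `Mor C` as an object of `F(C)`. -/
def toFactCat {C : Type u} [Category.{v} C] (m : Mor C) : FactCat C := m

/-- Reinterpret an object of `F(C)` as an element of `Mor C`. -/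
def FactCat.toMor {C : Type u} [Category.{v} C] (m : FactCat C) : Mor C := m

instance FactCat.category (C : Type u) [Category.{v} C] : Category (FactCat C) where
  Hom f g :=
    {p : (g.toMor.1 ⟶ f.toMor.1) × (f.toMor.2.1 ⟶ g.toMor.2.1) //
      p.1 ≫ f.toMor.2.2 ≫ p.2 = g.toMor.2.2}
  id f := ⟨(𝟙 _, 𝟙 _), by simp⟩
  comp {f g h} p q := ⟨(q.1.1 ≫ p.1.1, p.1.2 ≫ q.1.2), by
    calc (q.1.1 ≫ p.1.1) ≫ f.toMor.2.2 ≫ (p.1.2 ≫ q.1.2)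
        = q.1.1 ≫ (p.1.1 ≫ f.toMor.2.2 ≫ p.1.2) ≫ q.1.2 := by simp
      _ = q.1.1 ≫ g.toMor.2.2 ≫ q.1.2 := by rw [p.2]
      _ = h.toMor.2.2 := q.2⟩
  id_comp p := by apply Subtype.ext; simp
  comp_id p := by apply Subtype.ext; simp
  assoc p q r := by apply Subtype.ext; simp

/-- The abelian group `D_m` associated by a natural system `N : F(C) → Ab` to a
morphism `m`. -/
def elN {C : Type u} [Category.{v} C] (N : FactCat C ⥤ AddCommGrpCat.{w}) (m : Mor C) :
    Type w :=
  N.obj (toFactCat m)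

noncomputable instance elN.addCommGroup {C : Type u} [Category.{v} C]
    (N : FactCat C ⥤ AddCommGrpCat.{w}) (m : Mor C) : AddCommGroup (elN N m) :=
  inferInstanceAs (AddCommGroup (N.obj (toFactCat m)))

/-- The morphism `(f, 1) : g → g ≫ f` of `F(C)` inducing `f_*`. -/
def factPushHom {C : Type u} [Category.{v} C] {x y z : C} (g : x ⟶ y) (f : y ⟶ z) :
    toFactCat (mk3 g) ⟶ toFactCat (mk3 (g ≫ f)) :=
  ⟨(𝟙 x, f), by simp [toFactCat, FactCat.toMor, mk3]⟩

/-- The morphism `(1, g) : f → g ≫ f` of `F(C)` inducing `g^*`. -/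
def factPullHom {C : Type u} [Category.{v} C] {x y z : C} (g : x ⟶ y) (f : y ⟶ z) :
    toFactCat (mk3 f) ⟶ toFactCat (mk3 (g ≫ f)) :=
  ⟨(g, 𝟙 z), by simp [toFactCat, FactCat.toMor, mk3]⟩

/-- `f_* : D_g → D_{f∘g}` (post-composition by `f`). -/
def fpush {C : Type u} [Category.{v} C] (N : FactCat C ⥤ AddCommGrpCat.{w}) {x y z : C}
    (g : x ⟶ y) (f : y ⟶ z) : elN N (mk3 g) → elN N (mk3 (g ≫ f)) :=
  fun a => N.map (factPushHom g f) a

/-- `g^* : D_f → D_{f∘g}` (pre-composition by `g`). -/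
def fpull {C : Type u} [Category.{v} C] (N : FactCat C ⥤ AddCommGrpCat.{w}) {x y z : C}
    (g : x ⟶ y) (f : y ⟶ z) : elN N (mk3 f) → elN N (mk3 (g ≫ f)) :=
  fun a => N.map (factPullHom g f) a

/-- Transport in the coefficients of a natural system along an equality of morphisms. -/
def elCast {C : Type u} [Category.{v} C] (N : FactCat C ⥤ AddCommGrpCat.{w}) {x y : C}
    {f g : x ⟶ y} (h : f = g) (a : elN N (mk3 f)) : elN N (mk3 g) := by
  subst h; exact a

/-- A linear extension `D₊ → E → C` of a small category `C` by a natural system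
`N : F(C) → Ab` (Definition 5.1 of Kuribayashi–Matsuo, after Baues–Wirsching):
`E` has the same objects as `C`, `q` is a full functor which is the identity on
objects, each `D_f` acts transitively and effectively on `q⁻¹(f)`, and the linear
distributivity law holds. -/
structure LinExt (C : Type u) [Category.{v} C]
    (N : FactCat C ⥤ AddCommGrpCat.{w}) where
  hom : C → C → Type w
  id' : ∀ x : C, hom x x
  comp' : ∀ {x y z : C}, hom x y → hom y z → hom x z
  id_comp' : ∀ {x y : C} (e : hom x y), comp' (id' x) e = e
  comp_id' : ∀ {x y : C} (e : hom x y), comp' e (id' y) = e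
  assoc' : ∀ {w x y z : C} (a : hom w x) (b : hom x y) (c : hom y z),
    comp' (comp' a b) c = comp' a (comp' b c)
  /-- the projection `q`, identity on objects -/
  q : ∀ {x y : C}, hom x y → (x ⟶ y)
  q_id : ∀ x : C, q (id' x) = 𝟙 x
  q_comp : ∀ {x y z : C} (e : hom x y) (e' : hom y z), q (comp' e e') = q e ≫ q e'
  /-- `q` is full -/
  q_surj : ∀ {x y : C} (f : x ⟶ y), ∃ e : hom x y, q e = f
  /-- the action of `D_f` on `q⁻¹(f)`, written `e + a` -/
  act : ∀ {x y : C} (e : hom x y), elN N (mk3 (q e)) → hom x y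
  act_q : ∀ {x y : C} (e : hom x y) (a : elN N (mk3 (q e))), q (act e a) = q e
  act_zero : ∀ {x y : C} (e : hom x y), act e 0 = e
  act_add : ∀ {x y : C} (e : hom x y) (a b : elN N (mk3 (q e))),
    act (act e a) (elCast N (act_q e a).symm b) = act e (a + b)
  /-- transitivity of the action on fibers of `q` -/
  act_trans : ∀ {x y : C} (e e' : hom x y) (h : q e = q e'),
    ∃ a : elN N (mk3 (q e)), act e a = e'
  /-- effectiveness (freeness) of the action -/
  act_free : ∀ {x y : C} (e : hom x y) (a : elN N (mk3 (q e))), act e a = e → a = 0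
  /-- the linear distributivity law `(f₀+α)(g₀+β) = f₀g₀ + f_*β + g^*α` -/
  distrib : ∀ {x y z : C} (g₀ : hom x y) (f₀ : hom y z)
    (β : elN N (mk3 (q g₀))) (α : elN N (mk3 (q f₀))),
    comp' (act g₀ β) (act f₀ α) =
      act (comp' g₀ f₀)
        (elCast N (q_comp g₀ f₀).symm
          (fpush N (q g₀) (q f₀) β + fpull N (q g₀) (q f₀) α))

/-- The total category `E` of a linear extension. -/
def LinExt.Carrier {C : Type u} [Category.{v} C]
    {N : FactCat C ⥤ AddCommGrpCat.{w}} (_ : LinExt C N) : Type u := C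

instance LinExt.category {C : Type u} [Category.{v} C]
    {N : FactCat C ⥤ AddCommGrpCat.{w}} (L : LinExt C N) : Category L.Carrier where
  Hom x y := L.hom x y
  id x := L.id' x
  comp e e' := L.comp' e e'
  id_comp e := L.id_comp' e
  comp_id e := L.comp_id' e
  assoc a b c := L.assoc' a b c

/-- The projection functor `q : E ⥤ C` of a linear extension. -/
def LinExt.qFunctor {C : Type u} [Category.{v} C]
    {N : FactCat C ⥤ AddCommGrpCat.{w}} (L : LinExt C N) : L.Carrier ⥤ C where
  obj x := x
  map e := L.q e
  map_id x := L.q_id x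
  map_comp e e' := L.q_comp e e'

/-- The partition `S̃ = {q⁻¹(σ)}_{σ ∈ S}` of `mor E`. -/
def preimagePart {C : Type u} [Category.{v} C] {N : FactCat C ⥤ AddCommGrpCat.{w}}
    (L : LinExt C N) (S : Set (Set (Mor C))) : Set (Set (Mor L.Carrier)) :=
  {s | ∃ σ ∈ S, s = morMap L.qFunctor ⁻¹' σ}

/-- A proper morphism of quasi-schemoids: a morphism which is injective on the
partitions. -/
def IsProperQSMor {C : Type u} {D : Type u₂} [Category.{v} C] [Category.{v₂} D]
    (SC : Set (Set (Mor C))) (SD : Set (Set (Mor D))) (F : C ⥤ D) : Prop :=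
  IsQSMor SC SD F ∧
    ∀ σ₁ ∈ SC, ∀ σ₂ ∈ SC, ∀ τ ∈ SD,
      morMap F '' σ₁ ⊆ τ → morMap F '' σ₂ ⊆ τ → σ₁ = σ₂

/-! Since `D_f` acts simply transitively on `q⁻¹(f)`, every fiber of `q` has `♯D_f` elements.
Invertibility of `1_*` and `1^*` identifies `D_f` with `D_{1_{s(f)}}`, whose cardinality is
constant on each class by hypothesis. Admissibility holds because `q` is the identity on
objects and the classes of `S̃` are full preimages. -/

lemma elCast_eq_zero_iff {C : Type u} [Category.{v} C] (N : FactCat C ⥤ AddCommGrpCat.{w})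
    {x y : C} {f g : x ⟶ y} (h : f = g) (a : elN N (mk3 f)) :
    elCast N h a = 0 ↔ a = 0 := by
  subst h
  exact Iff.rfl

lemma mk3_inj {C : Type u} [Category.{v} C] {x y : C} {f g : x ⟶ y} :
    mk3 f = mk3 g ↔ f = g := by
  change (⟨x, y, f⟩ : Σ (x y : C), x ⟶ y) = ⟨x, y, g⟩ ↔ f = g
  simp

lemma card_elN_eq_card_elN_idMor {C : Type u} [Category.{v} C]
    (N : FactCat C ⥤ AddCommGrpCat.{w}) (m : Mor C)
    (hpush : Function.Bijective (fpush N (𝟙 m.src) m.2.2))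
    (hpull : Function.Bijective (fpull N (𝟙 m.src) m.2.2)) :
    Nat.card (elN N m) = Nat.card (elN N (idMor m.src)) :=
  Nat.card_congr ((Equiv.ofBijective _ hpull).trans (Equiv.ofBijective _ hpush).symm)

namespace LinExt

variable {C : Type u} [Category.{v} C] {N : FactCat C ⥤ AddCommGrpCat.{w}} (L : LinExt C N)

lemma act_injective {x y : C} (e : L.hom x y) : Function.Injective (L.act e) := by
  intro a b hab
  have h := L.act_add e a (b - a)
  rw [add_sub_cancel, ← hab] at h
  exact (sub_eq_zero.mp ((elCast_eq_zero_iff N _ _).mp (L.act_free _ _ h))).symm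

noncomputable def actEquiv {x y : C} (e : L.hom x y) :
    elN N (mk3 (L.q e)) ≃ {e' : L.hom x y // L.q e' = L.q e} :=
  Equiv.ofBijective (fun a => ⟨L.act e a, L.act_q e a⟩)
    ⟨fun _ _ hab => L.act_injective e (congrArg Subtype.val hab),
      fun ⟨e', he'⟩ => (L.act_trans e e' he'.symm).imp fun _ ha => Subtype.ext ha⟩

lemma card_fiber_q {x y : C} (f : x ⟶ y) :
    Nat.card {e : L.hom x y // L.q e = f} = Nat.card (elN N (mk3 f)) := by
  obtain ⟨e, rfl⟩ := L.q_surj f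
  exact (Nat.card_congr (L.actEquiv e)).symm

noncomputable def morFiberEquiv {x y : C} (f : x ⟶ y) :
    {e : L.hom x y // L.q e = f} ≃ {m : Mor L.Carrier // morMap L.qFunctor m = mk3 f} :=
  Equiv.ofBijective (fun e => ⟨@mk3 L.Carrier _ x y e.1, congrArg mk3 e.2⟩)
    ⟨fun e₁ e₂ h => Subtype.ext <| mk3_inj.mp
        (congrArg Subtype.val h : (mk3 e₁.1 : Mor L.Carrier) = mk3 e₂.1), by
      rintro ⟨⟨a, b, e⟩, he⟩
      obtain ⟨rfl, he⟩ := Sigma.mk.inj_iff.mp he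
      obtain ⟨rfl, he⟩ := Sigma.mk.inj_iff.mp (eq_of_heq he)
      exact ⟨⟨e, eq_of_heq he⟩, rfl⟩⟩

lemma card_preimage_fiber (σ : Set (Mor C)) {a x : C} (h : a ⟶ x) (hh : mk3 h ∈ σ) :
    Nat.card ({f | f ∈ morMap L.qFunctor ⁻¹' σ ∧ Mor.tgt f = x ∧
      morMap L.qFunctor f = mk3 h} : Set (Mor L.Carrier)) = Nat.card (elN N (mk3 h)) := by
  have hset : {f | f ∈ morMap L.qFunctor ⁻¹' σ ∧ Mor.tgt f = x ∧
      morMap L.qFunctor f = mk3 h} = {f : Mor L.Carrier | morMap L.qFunctor f = mk3 h} := by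
    ext f
    refine ⟨fun hf => hf.2.2, fun hf => ⟨?_, congrArg Mor.tgt hf, hf⟩⟩
    rwa [Set.mem_preimage, hf]
  rw [hset, ← L.card_fiber_q h]
  exact (Nat.card_congr (L.morFiberEquiv h)).symm

lemma isAdmissible_preimagePart (S : Set (Set (Mor C))) :
    IsAdmissible (preimagePart L S) S L.qFunctor := by
  refine ⟨?_, ?_⟩
  · rintro _ ⟨σ, hσ, rfl⟩
    exact ⟨σ, hσ, Set.image_preimage_subset _ _⟩
  · rintro x _ ⟨σ, -, rfl⟩ _ ⟨f, hf, rfl⟩ htgt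
    exact ⟨f, hf, htgt, rfl⟩

end LinExt

/-- Proposition 6.10 of Kuribayashi–Matsuo: for a schemoid extension
`D₊ → (E,S̃) → (C,S)` with `S̃ = {q⁻¹(σ)}`, the proper morphism `q` is admissible;
moreover, if `(C,S)` is basic, then for each class `σ̃ = q⁻¹(σ)` the constant
`n_{σ̃}^q` equals `♯D_g` for any `g ∈ σ`. -/
theorem linExt_qFunctor_admissible
    {C : Type u} [Category.{v} C] (Q : QuasiSchemoid C)
    (N : FactCat C ⥤ AddCommGrpCat.{w}) (L : LinExt C N)
    (hinv : ∀ {x y z : C} (g : x ⟶ y) (f : y ⟶ z),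
      Function.Bijective (fpush N g f) ∧ Function.Bijective (fpull N g f))
    (hiso : ∀ σ ∈ Q.part, ∀ f ∈ σ, ∀ g ∈ σ,
      Nonempty (elN N (idMor (Mor.src f)) ≃+ elN N (idMor (Mor.src g)))) :
    IsAdmissible (preimagePart L Q.part) Q.part L.qFunctor ∧
    ((Q.IsUnital ∧ ∀ m : Mor C, ∃ g' : m.2.1 ⟶ m.1,
        m.2.2 ≫ g' = 𝟙 m.1 ∧ g' ≫ m.2.2 = 𝟙 m.2.1) →
      ∀ σ ∈ Q.part, ∀ g ∈ σ, ∀ (x : L.Carrier), ∀ h ∈ σ, Mor.tgt h = L.qFunctor.obj x →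
        Nat.card ({f | f ∈ morMap L.qFunctor ⁻¹' σ ∧ Mor.tgt f = x ∧
            morMap L.qFunctor f = h} : Set (Mor L.Carrier)) =
          Nat.card (elN N g)) := by
  refine ⟨L.isAdmissible_preimagePart Q.part, ?_⟩
  rintro - σ hσ g hg x ⟨a, b, h⟩ hh htgt
  obtain rfl : b = x := htgt
  obtain ⟨φ⟩ := hiso σ hσ (mk3 h) hh g hg
  calc _ = Nat.card (elN N (mk3 h)) := L.card_preimage_fiber σ h hh
    _ = Nat.card (elN N (idMor a)) :=
      card_elN_eq_card_elN_idMor N (mk3 h) (hinv _ _).1 (hinv _ _).2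
    _ = Nat.card (elN N (idMor g.src)) := Nat.card_congr φ.toEquiv
    _ = Nat.card (elN N g) := (card_elN_eq_card_elN_idMor N g (hinv _ _).1 (hinv _ _).2).symm
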